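/- Let f be a nonzero polynomial f(x, y) = a·x² + b·x·y + c·y² + d·x + e·y + g with zero set S ⊆ ℝ². Let P, Q ∈ S with P ≠ Q, let M = (P + Q)/2, and suppose the line ℓ through P and Q is not contained in S. Let A, B, C, D ∈ S be pairwise distinct points with no three of them collinear, none of them lying on ℓ, such that M lies on the line through A and B and on the line through C and D, and these two lines are distinct. Suppose X is a point lying on both the line through A and D and the line ℓ, and Y is a point lying on both the line through B and C and the line ℓ. Then M = (X + Y)/2. -/

import Mathlib

/-- A conic (possibly degenerate) in the affine plane `ℝ × ℝ`, given by the six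
coefficients of a polynomial `a·x² + b·x·y + c·y² + d·x + e·y + g`. -/
structure Conic where
  a : ℝ
  b : ℝ
  c : ℝ
  d : ℝ
  e : ℝ
  g : ℝ

/-- Evaluation of the defining polynomial of a conic at a point of `ℝ × ℝ`. -/
def Conic.eval (f : Conic) (p : ℝ × ℝ) : ℝ :=
  f.a * p.1 ^ 2 + f.b * p.1 * p.2 + f.c * p.2 ^ 2 + f.d * p.1 + f.e * p.2 + f.g

/-- The defining polynomial is nonzero. -/
def Conic.Nonzero (f : Conic) : Prop :=
  ¬ (f.a = 0 ∧ f.b = 0 ∧ f.c = 0 ∧ f.d = 0 ∧ f.e = 0 ∧ f.g = 0)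

/-- The conic passes through the four points `A`, `B`, `C`, `D`. -/
def Conic.Through (f : Conic) (A B C D : ℝ × ℝ) : Prop :=
  f.eval A = 0 ∧ f.eval B = 0 ∧ f.eval C = 0 ∧ f.eval D = 0

/-- No three of the four points `A`, `B`, `C`, `D` are collinear. -/
def NoThreeCollinear (A B C D : ℝ × ℝ) : Prop :=
  ¬ Collinear ℝ ({A, B, C} : Set (ℝ × ℝ)) ∧ ¬ Collinear ℝ ({A, B, D} : Set (ℝ × ℝ)) ∧
  ¬ Collinear ℝ ({A, C, D} : Set (ℝ × ℝ)) ∧ ¬ Collinear ℝ ({B, C, D} : Set (ℝ × ℝ))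

/-- The line through `M` with direction `u`. -/
def parmLine (M u : ℝ × ℝ) : Set (ℝ × ℝ) :=
  {p | ∃ t : ℝ, p = M + t • u}

/-! The proof works in affine coordinates centred at `M`. Since `M` is the midpoint of the chord
`PQ = [M - w, M + w]`, the derivative of `f` at `M` vanishes in the direction `w`, so
`f(M + t w) = (1 - t²) f(M)`, and `f(M) ≠ 0` because the line `PQ` is not contained in the conic.
Write `A, B = M + a u, M + b u` and `C, D = M + c v, M + d v`; Vieta's formulas for the
restrictions of `f` to the lines `AB` and `CD` give `(1/a + 1/b) f(M) = -∂_u f(M)` and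
`(1/c + 1/d) f(M) = -∂_v f(M)`. In the basis `(u, v)` put `w = α u + β v`; if `X = M + x w` and
`Y = M + y w`, the intercept equations of the lines `AD` and `BC` read `x (α/a + β/d) = 1` and
`y (α/b + β/c) = 1`. Adding, `1/x + 1/y = -∂_w f(M) / f(M) = 0`, that is `x + y = 0`. -/

section LinesInModules

variable {K V : Type*} [Field K] [AddCommGroup V] [Module K V]

theorem exists_eq_sub_and_eq_add_of_eq_midpoint [Invertible (2 : K)] {M P Q : V}
    (h : M = midpoint K P Q) : ∃ w : V, P = M - w ∧ Q = M + w := by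
  refine ⟨M - P, by abel, ?_⟩
  rw [← midpoint_eq_iff.1 h.symm, AffineEquiv.pointReflection_apply, vsub_eq_sub, vadd_eq_add,
    add_comm]

theorem midpoint_add_smul_add_smul_of_add_eq_zero [Invertible (2 : K)] (M w : V) {x y : K}
    (h : x + y = 0) : midpoint K (M + x • w) (M + y • w) = M := by
  rw [midpoint_eq_iff, AffineEquiv.pointReflection_apply, vsub_eq_sub, vadd_eq_add,
    eq_neg_of_add_eq_zero_right h]
  module

theorem mem_affineSpan_pair_sub_add_iff [Invertible (2 : K)] {M w X : V} :
    X ∈ line[K, M - w, M + w] ↔ ∃ x : K, X = M + x • w := by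
  rw [mem_affineSpan_pair_iff_exists_lineMap_eq]
  constructor
  · rintro ⟨r, rfl⟩
    exact ⟨2 * r - 1, by rw [AffineMap.lineMap_apply_module']; module⟩
  · rintro ⟨x, rfl⟩
    refine ⟨⅟2 * (x + 1), ?_⟩
    rw [AffineMap.lineMap_apply_module']
    have h2 : ⅟2 * (x + 1) * 2 = x + 1 := by rw [mul_comm, ← mul_assoc, mul_invOf_self, one_mul]
    linear_combination (norm := module) h2 • w

theorem exists_eq_add_smul_of_mem_affineSpan_pair {M A B : V} (h : M ∈ line[K, A, B]) :
    ∃ (a : K) (u : V), A = M + a • u ∧ B = M + (a + 1) • u := by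
  obtain ⟨s, rfl⟩ := mem_affineSpan_pair_iff_exists_lineMap_eq.1 h
  refine ⟨-s, B - A, ?_, ?_⟩ <;> rw [AffineMap.lineMap_apply_module'] <;> module

theorem linearIndependent_of_not_collinear {M u v : V} {a b c : K}
    (h : ¬ Collinear K {M + a • u, M + b • u, M + c • v}) : LinearIndependent K ![u, v] := by
  by_cases hu : u = 0
  · subst hu
    simp only [smul_zero, add_zero, Set.insert_eq_of_mem, Set.mem_insert_iff,
      Set.mem_singleton_iff, true_or] at h
    exact absurd (collinear_pair K _ _) h
  rw [LinearIndependent.pair_iff' hu]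
  rintro k rfl
  refine h ((collinear_iff_exists_forall_eq_smul_vadd _).2 ⟨M, u, ?_⟩)
  simp only [Set.mem_insert_iff, Set.mem_singleton_iff, forall_eq_or_imp, forall_eq, vadd_eq_add]
  exact ⟨⟨a, add_comm _ _⟩, ⟨b, add_comm _ _⟩, ⟨c * k, by rw [smul_smul]; exact add_comm _ _⟩⟩

theorem exists_eq_smul_add_smul_of_linearIndependent [FiniteDimensional K V]
    (hV : Module.finrank K V = 2) {u v : V} (huv : LinearIndependent K ![u, v]) (w : V) :
    ∃ α β : K, w = α • u + β • v := by
  have hw : w ∈ Submodule.span K (Set.range ![u, v]) := by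
    rw [huv.span_eq_top_of_card_eq_finrank' (by simp [hV])]
    trivial
  rw [Matrix.range_cons_cons_empty, Submodule.mem_span_pair] at hw
  obtain ⟨α, β, h⟩ := hw
  exact ⟨α, β, h.symm⟩

theorem div_add_div_eq_one_of_mem_affineSpan_pair {u v : V} (huv : LinearIndependent K ![u, v])
    {M : V} {a d ξ η : K} (ha : a ≠ 0) (hd : d ≠ 0)
    (h : M + (ξ • u + η • v) ∈ line[K, M + a • u, M + d • v]) : ξ / a + η / d = 1 := by
  obtain ⟨t, ht⟩ := mem_affineSpan_pair_iff_exists_lineMap_eq.1 h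
  rw [AffineMap.lineMap_apply_module] at ht
  obtain ⟨hξ, hη⟩ := huv.eq_of_pair (s := (1 - t) * a) (t := t * d) (s' := ξ) (t' := η)
    (by linear_combination (norm := module) ht)
  rw [← hξ, ← hη]
  field_simp
  ring

end LinesInModules

theorem inv_add_inv_mul_eq_neg_of_quadratic_roots {K : Type*} [Field K] {q l c a b : K}
    (hc : c ≠ 0) (hab : a ≠ b) (ha : q * a ^ 2 + l * a + c = 0)
    (hb : q * b ^ 2 + l * b + c = 0) : (a⁻¹ + b⁻¹) * c = -l := by
  have hsum : q * (a + b) + l = 0 := by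
    refine (mul_eq_zero.1 ?_).resolve_left (sub_ne_zero.2 hab)
    linear_combination ha - hb
  have hprod : q * (a * b) = c := by linear_combination -ha + a * hsum
  have ha0 : a ≠ 0 := by rintro rfl; exact hc (by simpa using hprod.symm)
  have hb0 : b ≠ 0 := by rintro rfl; exact hc (by simpa using hprod.symm)
  have hinv : (a⁻¹ + b⁻¹) * (a * b) = a + b := by field_simp; ring
  rw [← hprod]
  linear_combination q * hinv + hsum

namespace Conic

def quadPart (f : Conic) (u : ℝ × ℝ) : ℝ :=
  f.a * u.1 ^ 2 + f.b * u.1 * u.2 + f.c * u.2 ^ 2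

def dirDeriv (f : Conic) (M u : ℝ × ℝ) : ℝ :=
  (2 * f.a * M.1 + f.b * M.2 + f.d) * u.1 + (f.b * M.1 + 2 * f.c * M.2 + f.e) * u.2

theorem eval_add_smul (f : Conic) (M u : ℝ × ℝ) (t : ℝ) :
    f.eval (M + t • u) = f.quadPart u * t ^ 2 + f.dirDeriv M u * t + f.eval M := by
  simp only [eval, quadPart, dirDeriv, Prod.fst_add, Prod.snd_add, Prod.smul_fst, Prod.smul_snd,
    smul_eq_mul]
  ring

theorem dirDeriv_smul_add_smul (f : Conic) (M u v : ℝ × ℝ) (α β : ℝ) :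
    f.dirDeriv M (α • u + β • v) = α * f.dirDeriv M u + β * f.dirDeriv M v := by
  simp only [dirDeriv, Prod.fst_add, Prod.snd_add, Prod.smul_fst, Prod.smul_snd, smul_eq_mul]
  ring

variable {f : Conic} {M u w : ℝ × ℝ}

theorem dirDeriv_eq_zero_of_chord_midpoint (hP : f.eval (M - w) = 0) (hQ : f.eval (M + w) = 0) :
    f.dirDeriv M w = 0 := by
  have hP' := f.eval_add_smul M w (-1)
  have hQ' := f.eval_add_smul M w 1
  rw [neg_one_smul, ← sub_eq_add_neg, hP] at hP'
  rw [one_smul, hQ] at hQ'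
  linear_combination (hP' - hQ') / 2

theorem eval_add_smul_of_chord_midpoint (hP : f.eval (M - w) = 0) (hQ : f.eval (M + w) = 0)
    (t : ℝ) : f.eval (M + t • w) = (1 - t ^ 2) * f.eval M := by
  have hQ' := f.eval_add_smul M w 1
  rw [one_smul, hQ, dirDeriv_eq_zero_of_chord_midpoint hP hQ] at hQ'
  rw [eval_add_smul, dirDeriv_eq_zero_of_chord_midpoint hP hQ]
  linear_combination -t ^ 2 * hQ'

theorem ne_zero_of_eval_add_smul_eq_zero (hM : f.eval M ≠ 0) {a : ℝ}
    (ha : f.eval (M + a • u) = 0) : a ≠ 0 := by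
  rintro rfl
  rw [zero_smul, add_zero] at ha
  exact hM ha

theorem inv_add_inv_mul_eval_eq_neg_dirDeriv (hM : f.eval M ≠ 0) {a b : ℝ} (hab : a ≠ b)
    (ha : f.eval (M + a • u) = 0) (hb : f.eval (M + b • u) = 0) :
    (a⁻¹ + b⁻¹) * f.eval M = -f.dirDeriv M u := by
  rw [eval_add_smul] at ha hb
  exact inv_add_inv_mul_eq_neg_of_quadratic_roots hM hab ha hb

end Conic

theorem butterfly_theorem_conic_general
    (f : Conic)
    (P Q : ℝ × ℝ) (hfP : f.eval P = 0) (hfQ : f.eval Q = 0)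
    (M : ℝ × ℝ) (hM : M = midpoint ℝ P Q)
    (hline : ¬ ((affineSpan ℝ ({P, Q} : Set (ℝ × ℝ)) : Set (ℝ × ℝ)) ⊆
      {p : ℝ × ℝ | f.eval p = 0}))
    (A B C D : ℝ × ℝ)
    (hfA : f.eval A = 0) (hfB : f.eval B = 0) (hfC : f.eval C = 0) (hfD : f.eval D = 0)
    (hgen : NoThreeCollinear A B C D)
    (hMAB : M ∈ affineSpan ℝ ({A, B} : Set (ℝ × ℝ)))
    (hMCD : M ∈ affineSpan ℝ ({C, D} : Set (ℝ × ℝ)))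
    (X Y : ℝ × ℝ)
    (hXAD : X ∈ affineSpan ℝ ({A, D} : Set (ℝ × ℝ)))
    (hXPQ : X ∈ affineSpan ℝ ({P, Q} : Set (ℝ × ℝ)))
    (hYBC : Y ∈ affineSpan ℝ ({B, C} : Set (ℝ × ℝ)))
    (hYPQ : Y ∈ affineSpan ℝ ({P, Q} : Set (ℝ × ℝ))) :
    M = midpoint ℝ X Y := by
  obtain ⟨w, rfl, rfl⟩ := exists_eq_sub_and_eq_add_of_eq_midpoint hM
  have hw := Conic.dirDeriv_eq_zero_of_chord_midpoint hfP hfQ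
  have hM0 : f.eval M ≠ 0 := fun h0 ↦ hline fun p hp ↦ by
    obtain ⟨t, rfl⟩ := mem_affineSpan_pair_sub_add_iff.1 hp
    simp [Conic.eval_add_smul_of_chord_midpoint hfP hfQ, h0]
  obtain ⟨a, u, rfl, rfl⟩ := exists_eq_add_smul_of_mem_affineSpan_pair hMAB
  obtain ⟨c, v, rfl, rfl⟩ := exists_eq_add_smul_of_mem_affineSpan_pair hMCD
  obtain ⟨x, rfl⟩ := mem_affineSpan_pair_sub_add_iff.1 hXPQ
  obtain ⟨y, rfl⟩ := mem_affineSpan_pair_sub_add_iff.1 hYPQ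
  have huv := linearIndependent_of_not_collinear hgen.1
  obtain ⟨α, β, rfl⟩ := exists_eq_smul_add_smul_of_linearIndependent (by simp) huv w
  have hAB := Conic.inv_add_inv_mul_eval_eq_neg_dirDeriv hM0 (by simp) hfA hfB
  have hCD := Conic.inv_add_inv_mul_eval_eq_neg_dirDeriv hM0 (by simp) hfC hfD
  rw [f.dirDeriv_smul_add_smul] at hw
  have hX := div_add_div_eq_one_of_mem_affineSpan_pair huv
    (Conic.ne_zero_of_eval_add_smul_eq_zero hM0 hfA)
    (Conic.ne_zero_of_eval_add_smul_eq_zero hM0 hfD)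
    (by rwa [smul_add, smul_smul, smul_smul] at hXAD)
  have hY := div_add_div_eq_one_of_mem_affineSpan_pair huv
    (Conic.ne_zero_of_eval_add_smul_eq_zero hM0 hfB)
    (Conic.ne_zero_of_eval_add_smul_eq_zero hM0 hfC)
    (by rwa [smul_add, smul_smul, smul_smul] at hYBC)
  have hsum : α / a + β / (c + 1) + (α / (a + 1) + β / c) = 0 := by
    refine (mul_eq_zero.1 ?_).resolve_right hM0
    linear_combination α * hAB + β * hCD - hw
  have hxy : x + y = 0 := by
    linear_combination -x * hY - y * hX + x * y * hsum
  exact (midpoint_add_smul_add_smul_of_add_eq_zero M _ hxy).symm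

/-- **The generalized butterfly theorem for conics.** Let `S` be a conic (zero set
of a nonzero polynomial of degree at most two), `PQ` a chord of `S` with midpoint
`M` whose line `ℓ` is not contained in `S`, and let `AB` and `CD` be two other
chords of `S` through `M`. If the lines `AD` and `BC` cut the line `ℓ` in points
`X` and `Y`, then `M` is the midpoint of `X` and `Y`. -/
theorem butterfly_theorem_conic
    (f : Conic) (hf : f.Nonzero)
    (P Q : ℝ × ℝ) (hfP : f.eval P = 0) (hfQ : f.eval Q = 0) (hPQ : P ≠ Q)
    (M : ℝ × ℝ) (hM : M = midpoint ℝ P Q)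
    (hline : ¬ ((affineSpan ℝ ({P, Q} : Set (ℝ × ℝ)) : Set (ℝ × ℝ)) ⊆
      {p : ℝ × ℝ | f.eval p = 0}))
    (A B C D : ℝ × ℝ)
    (hfA : f.eval A = 0) (hfB : f.eval B = 0) (hfC : f.eval C = 0) (hfD : f.eval D = 0)
    (hAB : A ≠ B) (hAC : A ≠ C) (hAD : A ≠ D)
    (hBC : B ≠ C) (hBD : B ≠ D) (hCD : C ≠ D)
    (hgen : NoThreeCollinear A B C D)
    (hAl : A ∉ affineSpan ℝ ({P, Q} : Set (ℝ × ℝ)))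
    (hBl : B ∉ affineSpan ℝ ({P, Q} : Set (ℝ × ℝ)))
    (hCl : C ∉ affineSpan ℝ ({P, Q} : Set (ℝ × ℝ)))
    (hDl : D ∉ affineSpan ℝ ({P, Q} : Set (ℝ × ℝ)))
    (hMAB : M ∈ affineSpan ℝ ({A, B} : Set (ℝ × ℝ)))
    (hMCD : M ∈ affineSpan ℝ ({C, D} : Set (ℝ × ℝ)))
    (hlines : affineSpan ℝ ({A, B} : Set (ℝ × ℝ)) ≠ affineSpan ℝ ({C, D} : Set (ℝ × ℝ)))
    (X Y : ℝ × ℝ)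
    (hXAD : X ∈ affineSpan ℝ ({A, D} : Set (ℝ × ℝ)))
    (hXPQ : X ∈ affineSpan ℝ ({P, Q} : Set (ℝ × ℝ)))
    (hYBC : Y ∈ affineSpan ℝ ({B, C} : Set (ℝ × ℝ)))
    (hYPQ : Y ∈ affineSpan ℝ ({P, Q} : Set (ℝ × ℝ))) :
    M = midpoint ℝ X Y :=
  butterfly_theorem_conic_general f P Q hfP hfQ M hM hline A B C D hfA hfB hfC hfD hgen hMAB hMCD X
    Y hXAD hXPQ hYBC hYPQ
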